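/- Let D be an m × n complex matrix decomposed as D = Σ_{g∈G} D^g over a finite abelian group G ≤ S_k of order k acting transitively on {1,...,k}, where the D^g have pairwise disjoint supports, and let D^ψ = Σ_{g∈G} D^g ⊗ P^g. Let W₁, W₂ be positive diagonal matrices of sizes n and m, and let χ_1 = 1, χ_2, ..., χ_k be the characters of G. Then the spectrum of (W₁ ⊗ I_k)⁻¹ (D^ψ)* (W₂ ⊗ I_k) D^ψ is the multiset union over j = 1, ..., k of the spectra of W₁⁻¹ (D^{χ_j})* W₂ D^{χ_j}, where D^{χ_j} := Σ_{g∈G} χ_j(g) D^g and * denotes conjugate transpose. In particular the j = 1 term recovers W₁⁻¹ D* W₂ D. -/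

import Mathlib

/-!
Transitivity and `|G| = k` make `g ↦ g 0` a bijection `G ≃ Fin k`; write `g_i` for the element
sending `0` to `i`. Then the columns of the character matrix `T i j = χ_j(g_i)⁻¹` are common
eigenvectors of the regular representation, `P^g T = T diag(χ(g))`, and orthogonality of distinct
characters gives `Tᴴ T = k • 1`. Conjugation by `1 ⊗ T` therefore turns `D^ψ` into the
block-diagonal matrix of the `D^{χ_j}`, commutes with the weights `W ⊗ 1`, and, being a unitary
up to a scalar, also with conjugate transposes. So the operator is similar to the block-diagonal
matrix with blocks `W₁⁻¹ (D^{χ_j})ᴴ W₂ D^{χ_j}`.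
-/

open Matrix Kronecker

/-- The permutation matrix of `g ∈ S_k` (complex entries). -/
def permMat (k : ℕ) (g : Equiv.Perm (Fin k)) : Matrix (Fin k) (Fin k) ℂ :=
  fun i j => if i = g j then 1 else 0

namespace Matrix

variable {l m n o R : Type*}

theorem charpoly_blockDiagonal [Fintype n] [DecidableEq n] [Fintype o] [DecidableEq o]
    [CommRing R] (M : o → Matrix n n R) :
    (blockDiagonal M).charpoly = ∏ j, (M j).charpoly := by
  have hchar : charmatrix (blockDiagonal M) = blockDiagonal fun j => charmatrix (M j) := by
    ext ⟨i, a⟩ ⟨j, b⟩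
    by_cases h : (i, a) = (j, b)
    · simp_all
    · rw [charmatrix_apply_ne _ _ _ h]
      simp only [Prod.mk.injEq, not_and_or] at h
      rcases eq_or_ne a b with rfl | hab
      · simp [blockDiagonal_apply, charmatrix_apply_ne _ _ _ (h.resolve_right (by simp))]
      · simp [blockDiagonal_apply, hab]
  rw [charpoly, hchar, det_blockDiagonal]
  rfl

theorem charpoly_eq_of_mul_eq_mul [Fintype n] [DecidableEq n] [CommRing R]
    {A B S : Matrix n n R} (hS : IsUnit S) (h : A * S = S * B) : A.charpoly = B.charpoly := by
  obtain ⟨u, rfl⟩ := hS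
  rw [← charpoly_units_conj' u A, ← coe_units_inv, Matrix.mul_assoc, h, ← Matrix.mul_assoc,
    Units.inv_mul, Matrix.one_mul]

theorem conjTranspose_mul_eq_mul_conjTranspose [Fintype m] [DecidableEq m] [Fintype n]
    [DecidableEq n] [Field R] [StarRing R] {X Y : Matrix m n R} {U : Matrix n n R}
    {V : Matrix m m R} {c : R} (hc : c ≠ 0) (hU : U * Uᴴ = c • 1) (hV : Vᴴ * V = c • 1)
    (h : X * U = V * Y) : Xᴴ * V = U * Yᴴ := by
  have h' : Uᴴ * Xᴴ = Yᴴ * Vᴴ := by rw [← conjTranspose_mul, h, conjTranspose_mul]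
  apply smul_right_injective _ hc
  calc c • (Xᴴ * V) = U * Uᴴ * Xᴴ * V := by
        rw [hU, Matrix.smul_mul, Matrix.one_mul, Matrix.smul_mul]
    _ = U * (Uᴴ * Xᴴ) * V := by rw [Matrix.mul_assoc U]
    _ = U * Yᴴ * (Vᴴ * V) := by rw [h']; simp only [Matrix.mul_assoc]
    _ = c • (U * Yᴴ) := by rw [hV, Matrix.mul_smul, Matrix.mul_one]

theorem sum_kronecker_diagonal [Fintype l] [DecidableEq o] [CommSemiring R]
    (D : l → Matrix m n R) (d : l → o → R) :
    ∑ g, D g ⊗ₖ diagonal (d g) = blockDiagonal fun j => ∑ g, d g j • D g := by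
  simp_rw [kronecker_diagonal, op_smul_eq_smul, ← blockDiagonalAddMonoidHom_apply, ← map_sum]
  congr 1
  ext1 j
  simp

theorem sum_kronecker_mul_one_kronecker [Fintype l] [Fintype m] [DecidableEq m] [Fintype n]
    [DecidableEq n] [Fintype o] [DecidableEq o] [CommSemiring R] (D : l → Matrix m n R)
    (P : l → Matrix o o R) {T : Matrix o o R} {d : l → o → R}
    (hP : ∀ g, P g * T = T * diagonal (d g)) :
    (∑ g, D g ⊗ₖ P g) * ((1 : Matrix n n R) ⊗ₖ T) =
      ((1 : Matrix m m R) ⊗ₖ T) * blockDiagonal fun j => ∑ g, d g j • D g := by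
  rw [← sum_kronecker_diagonal, Matrix.sum_mul, Matrix.mul_sum]
  refine Finset.sum_congr rfl fun g _ => ?_
  rw [← mul_kronecker_mul, ← mul_kronecker_mul, Matrix.mul_one, Matrix.one_mul, hP]

theorem kronecker_one_mul_one_kronecker [Fintype m] [DecidableEq m] [Fintype o] [DecidableEq o]
    [CommSemiring R] (W : Matrix m m R) (T : Matrix o o R) :
    (W ⊗ₖ (1 : Matrix o o R)) * ((1 : Matrix m m R) ⊗ₖ T) =
      ((1 : Matrix m m R) ⊗ₖ T) * (W ⊗ₖ (1 : Matrix o o R)) := by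
  rw [← mul_kronecker_mul, ← mul_kronecker_mul, Matrix.mul_one, Matrix.one_mul, Matrix.mul_one,
    Matrix.one_mul]

theorem one_kronecker_mul_one_kronecker_eq_smul_one [Fintype m] [DecidableEq m] [Fintype o]
    [DecidableEq o] [CommSemiring R] {A B : Matrix o o R} {c : R} (h : A * B = c • 1) :
    ((1 : Matrix m m R) ⊗ₖ A) * ((1 : Matrix m m R) ⊗ₖ B) = c • 1 := by
  rw [← mul_kronecker_mul, Matrix.one_mul, h, kronecker_smul c (1 : Matrix m m R),
    one_kronecker_one]

theorem mul_conjTranspose_eq_smul_one_of_conjTranspose_mul [Fintype n] [DecidableEq n] [Field R]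
    [StarRing R] {T : Matrix n n R} {c : R} (hc : c ≠ 0) (hT : Tᴴ * T = c • 1) :
    T * Tᴴ = c • 1 := by
  have hinv : T * (c⁻¹ • Tᴴ) = 1 := mul_eq_one_comm.mp <| by
    rw [Matrix.smul_mul, hT, smul_smul, inv_mul_cancel₀ hc, one_smul]
  rw [← one_smul R (T * Tᴴ), ← mul_inv_cancel₀ hc, mul_smul, ← Matrix.mul_smul, hinv]

theorem charpoly_inv_kronecker_one_mul_conjTranspose_mul_eq_prod [Fintype m] [DecidableEq m]
    [Fintype n] [DecidableEq n] [Fintype o] [DecidableEq o] [Field R] [StarRing R]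
    (W₁ : Matrix n n R) (W₂ : Matrix m m R) {X : Matrix (m × o) (n × o) R}
    {B : o → Matrix m n R} {T : Matrix o o R} {c : R} (hc : c ≠ 0) (hT : Tᴴ * T = c • 1)
    (hX : X * ((1 : Matrix n n R) ⊗ₖ T) = ((1 : Matrix m m R) ⊗ₖ T) * blockDiagonal B) :
    ((W₁ ⊗ₖ (1 : Matrix o o R))⁻¹ * Xᴴ * (W₂ ⊗ₖ (1 : Matrix o o R)) * X).charpoly =
      ∏ j, (W₁⁻¹ * (B j)ᴴ * W₂ * B j).charpoly := by
  have hSn : (1 ⊗ₖ T) * (1 ⊗ₖ T)ᴴ = c • (1 : Matrix (n × o) (n × o) R) := by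
    rw [conjTranspose_kronecker, conjTranspose_one]
    exact one_kronecker_mul_one_kronecker_eq_smul_one
      (mul_conjTranspose_eq_smul_one_of_conjTranspose_mul hc hT)
  have hSm : (1 ⊗ₖ T)ᴴ * (1 ⊗ₖ T) = c • (1 : Matrix (m × o) (m × o) R) := by
    rw [conjTranspose_kronecker, conjTranspose_one]
    exact one_kronecker_mul_one_kronecker_eq_smul_one hT
  have hXH : Xᴴ * ((1 : Matrix m m R) ⊗ₖ T) =
      ((1 : Matrix n n R) ⊗ₖ T) * blockDiagonal fun j => (B j)ᴴ := by
    rw [← blockDiagonal_conjTranspose]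
    exact conjTranspose_mul_eq_mul_conjTranspose hc hSn hSm hX
  have hS : IsUnit ((1 : Matrix n n R) ⊗ₖ T) := by
    refine IsUnit.of_mul_eq_one (c⁻¹ • (1 ⊗ₖ T)ᴴ) ?_
    rw [Matrix.mul_smul, hSn, smul_smul, inv_mul_cancel₀ hc, one_smul]
  rw [← charpoly_blockDiagonal]
  refine charpoly_eq_of_mul_eq_mul hS ?_
  rw [inv_kronecker, inv_one]
  simp only [Matrix.mul_assoc]
  rw [hX, ← Matrix.mul_assoc (W₂ ⊗ₖ 1), kronecker_one_mul_one_kronecker, Matrix.mul_assoc,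
    ← Matrix.mul_assoc Xᴴ, hXH, Matrix.mul_assoc, ← Matrix.mul_assoc (W₁⁻¹ ⊗ₖ 1),
    kronecker_one_mul_one_kronecker]
  simp only [kronecker_one, Matrix.mul_assoc, blockDiagonal_mul]

end Matrix

theorem MonoidHom.star_apply_eq_inv {G : Type*} [Group G] [Finite G] (χ : G →* ℂ) (g : G) :
    star (χ g) = (χ g)⁻¹ := by
  have hpow : χ g ^ orderOf g = 1 := by rw [← map_pow, pow_orderOf_eq_one, map_one]
  rw [Complex.inv_eq_conj (Complex.norm_eq_one_of_pow_eq_one hpow (orderOf_pos g).ne')]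
  rfl

theorem MonoidHom.sum_mul_inv_eq_zero {G R : Type*} [Group G] [Fintype G] [Field R]
    {φ ψ : G →* R} (hφψ : φ ≠ ψ) : ∑ g, φ g * (ψ g)⁻¹ = 0 := by
  obtain ⟨h, hh⟩ := DFunLike.ne_iff.mp hφψ
  have hψ : ∀ g, ψ g ≠ 0 := fun g => (ψ.toHomUnits g).ne_zero
  have hshift : φ h * ∑ g, φ g * (ψ g)⁻¹ = ψ h * ∑ g, φ g * (ψ g)⁻¹ := by
    conv_rhs => rw [← Equiv.sum_comp (Equiv.mulLeft h) (fun g => φ g * (ψ g)⁻¹)]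
    rw [Finset.mul_sum, Finset.mul_sum]
    refine Finset.sum_congr rfl fun g _ => ?_
    simp only [Equiv.coe_mulLeft, map_mul]
    field_simp [hψ h, hψ g]
  refine (mul_right_injective₀ (sub_ne_zero.mpr hh)).eq_iff.mp ?_
  rw [sub_mul, hshift, sub_self, mul_zero]

theorem Subgroup.bijective_apply_of_transitive {α : Type*} [Finite α]
    (G : Subgroup (Equiv.Perm α)) (htr : ∀ i j : α, ∃ g ∈ G, g i = j)
    (hcard : Nat.card G = Nat.card α) (a : α) :
    Function.Bijective fun g : G => (g : Equiv.Perm α) a := by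
  refine Function.Surjective.bijective_of_nat_card_le (fun b => ?_) hcard.le
  obtain ⟨g, hg, rfl⟩ := htr a b
  exact ⟨⟨g, hg⟩, rfl⟩

section CharacterMatrix

variable {G ι : Type*} [Group G]

def characterMatrix (e : G ≃ ι) (χ : ι → G →* ℂ) : Matrix ι ι ℂ :=
  fun i j => χ j (e.symm i)⁻¹

theorem conjTranspose_characterMatrix_mul_self [Fintype G] [Fintype ι] [DecidableEq ι]
    (e : G ≃ ι) {χ : ι → G →* ℂ} (hχ : Function.Injective χ) :
    (characterMatrix e χ)ᴴ * characterMatrix e χ = (Fintype.card G : ℂ) • 1 := by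
  ext a b
  have hsum :
      ((characterMatrix e χ)ᴴ * characterMatrix e χ) a b = ∑ g, χ a g * (χ b g)⁻¹ := by
    rw [mul_apply, ← Equiv.sum_comp e]
    simp [characterMatrix, MonoidHom.star_apply_eq_inv]
  rw [hsum, Matrix.smul_apply, one_apply, smul_eq_mul]
  rcases eq_or_ne a b with rfl | hab
  · simp_rw [← map_inv, ← map_mul, mul_inv_cancel, map_one]
    simp
  · simp [hab, MonoidHom.sum_mul_inv_eq_zero (hχ.ne hab)]

theorem permMat_mul_characterMatrix {k : ℕ} (e : G ≃ Fin k) (χ : Fin k → G →* ℂ)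
    (ρ : G → Equiv.Perm (Fin k)) (he : ∀ g h, e (g * h) = ρ g (e h)) (g : G) :
    permMat k (ρ g) * characterMatrix e χ = characterMatrix e χ * diagonal fun j => χ j g := by
  have hρ : ∀ a, e.symm ((ρ g).symm a) = g⁻¹ * e.symm a := fun a => by
    rw [eq_inv_mul_iff_mul_eq, Equiv.eq_symm_apply, he, Equiv.apply_symm_apply,
      Equiv.apply_symm_apply]
  ext a b
  simp_rw [mul_diagonal, mul_apply, permMat, ite_mul, one_mul, zero_mul, ← Equiv.symm_apply_eq,
    Finset.sum_ite_eq, Finset.mem_univ, if_true, characterMatrix, hρ, _root_.mul_inv_rev,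
    inv_inv, map_mul]

end CharacterMatrix

theorem abelian_covering_spectral_union_general {m n k : ℕ} (hk : 0 < k)
    (G : Subgroup (Equiv.Perm (Fin k))) [Fintype ↥G]
    (htr : ∀ i j : Fin k, ∃ g ∈ G, g i = j)
    (hcard : Nat.card G = k)
    (Dg : G → Matrix (Fin m) (Fin n) ℂ)
    (w₁ : Fin n → ℝ) (w₂ : Fin m → ℝ)
    (χ : Fin k → (G → ℂ))
    (hhom : ∀ j : Fin k, ∀ a b : G, χ j (a * b) = χ j a * χ j b)
    (hone : ∀ j : Fin k, χ j 1 = 1)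
    (hdist : Function.Injective χ) :
    (((diagonal fun i => (w₁ i : ℂ)) ⊗ₖ (1 : Matrix (Fin k) (Fin k) ℂ))⁻¹ *
        (∑ g : G, Dg g ⊗ₖ permMat k (g : Equiv.Perm (Fin k)))ᴴ *
        ((diagonal fun i => (w₂ i : ℂ)) ⊗ₖ (1 : Matrix (Fin k) (Fin k) ℂ)) *
        (∑ g : G, Dg g ⊗ₖ permMat k (g : Equiv.Perm (Fin k)))).charpoly
      = ∏ j : Fin k,
        ((diagonal fun i => (w₁ i : ℂ))⁻¹ *
          (∑ g : G, χ j g • Dg g)ᴴ *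
          (diagonal fun i => (w₂ i : ℂ)) *
          (∑ g : G, χ j g • Dg g)).charpoly := by
  let χ' : Fin k → G →* ℂ := fun j => ⟨⟨χ j, hone j⟩, hhom j⟩
  have hχ' : Function.Injective χ' := fun a b hab => hdist (congrArg DFunLike.coe hab)
  let e : G ≃ Fin k := .ofBijective _
    (G.bijective_apply_of_transitive htr (by rw [hcard, Nat.card_fin]) ⟨0, hk⟩)
  refine charpoly_inv_kronecker_one_mul_conjTranspose_mul_eq_prod _ _
    (Nat.cast_ne_zero.mpr Fintype.card_ne_zero) (conjTranspose_characterMatrix_mul_self e hχ') ?_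
  exact sum_kronecker_mul_one_kronecker _ _
    (permMat_mul_characterMatrix e χ' (↑) fun _ _ => rfl)

/-- let `D = Σ_{g∈G} D^g` over a regular abelian subgroup
`G ≤ S_k` of order `k`, with pairwise disjoint supports, `D^ψ = Σ_g D^g ⊗ P^g`,
and characters `χ_1 = 1, χ_2, ..., χ_k` of `G`. Then the spectrum of
`(W₁ ⊗ I_k)⁻¹ (D^ψ)* (W₂ ⊗ I_k) D^ψ` is the multiset union over `j` of the
spectra of `W₁⁻¹ (D^{χ_j})* W₂ D^{χ_j}`, where `D^{χ_j} = Σ_g χ_j(g) D^g`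
(expressed via characteristic polynomials); the `j = 1` term recovers
`W₁⁻¹ D* W₂ D`. -/
theorem abelian_covering_spectral_union {m n k : ℕ} (hk : 0 < k)
    (G : Subgroup (Equiv.Perm (Fin k))) [Fintype ↥G]
    (hab : ∀ g ∈ G, ∀ h ∈ G, g * h = h * g)
    (htr : ∀ i j : Fin k, ∃ g ∈ G, g i = j)
    (hcard : Nat.card G = k)
    (Dg : G → Matrix (Fin m) (Fin n) ℂ)
    (hdisj : ∀ a b : G, a ≠ b → ∀ i j, Dg a i j = 0 ∨ Dg b i j = 0)
    (D : Matrix (Fin m) (Fin n) ℂ) (hD : D = ∑ g : G, Dg g)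
    (w₁ : Fin n → ℝ) (w₂ : Fin m → ℝ)
    (hw₁ : ∀ i, 0 < w₁ i) (hw₂ : ∀ i, 0 < w₂ i)
    (χ : Fin k → (G → ℂ))
    (hhom : ∀ j : Fin k, ∀ a b : G, χ j (a * b) = χ j a * χ j b)
    (hone : ∀ j : Fin k, χ j 1 = 1)
    (htriv : χ ⟨0, hk⟩ = fun _ => 1)
    (hdist : Function.Injective χ) :
    (((diagonal fun i => (w₁ i : ℂ)) ⊗ₖ (1 : Matrix (Fin k) (Fin k) ℂ))⁻¹ *
        (∑ g : G, Dg g ⊗ₖ permMat k (g : Equiv.Perm (Fin k)))ᴴ *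
        ((diagonal fun i => (w₂ i : ℂ)) ⊗ₖ (1 : Matrix (Fin k) (Fin k) ℂ)) *
        (∑ g : G, Dg g ⊗ₖ permMat k (g : Equiv.Perm (Fin k)))).charpoly
      = ∏ j : Fin k,
        ((diagonal fun i => (w₁ i : ℂ))⁻¹ *
          (∑ g : G, χ j g • Dg g)ᴴ *
          (diagonal fun i => (w₂ i : ℂ)) *
          (∑ g : G, χ j g • Dg g)).charpoly :=
  abelian_covering_spectral_union_general hk G htr hcard Dg w₁ w₂ χ hhom hone hdist
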